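/- In the UORO update, suppose E[s̄_t ⊗ θ̄_t] = G_t where G_t = ∂s_t/∂θ. Let ν be a vector of independent uniform ±1 signs, independent of (s̄_t, θ̄_t), let D = ∂F_state/∂s and H = ∂F_state/∂θ (deterministic matrices), and let ρ_0, ρ_1 be deterministic positive constants. Then with s̄_{t+1} := ρ_0 D s̄_t + ρ_1 ν and θ̄_{t+1} := θ̄_t/ρ_0 + (ν^T H)/ρ_1, E[s̄_{t+1} ⊗ θ̄_{t+1}] = D G_t + H = G_{t+1}. -/

import Mathlib

open Matrix BigOperators

noncomputable def sgn (b : Bool) : ℝ := if b then 1 else -1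

lemma sgn_not (b : Bool) : sgn (!b) = - sgn b := by cases b <;> simp [sgn]

lemma sgn_mul_self (b : Bool) : sgn b * sgn b = 1 := by cases b <;> simp [sgn]

lemma sum_sgn_mul_indep {n : ℕ} (i : Fin n) (f : (Fin n → Bool) → ℝ)
    (hf : ∀ ν b, f (Function.update ν i b) = f ν) :
    ∑ ν : Fin n → Bool, sgn (ν i) * f ν = 0 := by
  classical
  apply Finset.sum_ninvolution (g := fun ν => Function.update ν i (!ν i))
  · intro ν
    have h1 : f (Function.update ν i (!ν i)) = f ν := hf ν _
    have h2 : (Function.update ν i (!ν i)) i = !ν i := Function.update_self i _ ν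
    rw [h1, h2, sgn_not]; ring
  · intro ν _
    intro h
    have := congrFun h i
    simp at this
  · intro ν; exact Finset.mem_univ _
  · intro ν
    funext k
    by_cases hk : k = i
    · subst hk; simp
    · simp [Function.update_of_ne hk]

lemma sum_sgn {n : ℕ} (i : Fin n) : ∑ ν : Fin n → Bool, sgn (ν i) = 0 := by
  have := sum_sgn_mul_indep i (fun _ => 1) (fun _ _ => rfl)
  simpa using this

lemma sum_sgn_mul_sgn {n : ℕ} (i k : Fin n) :
    ∑ ν : Fin n → Bool, sgn (ν i) * sgn (ν k) = if i = k then (2 : ℝ) ^ n else 0 := by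
  classical
  by_cases h : i = k
  · subst h
    simp only [if_pos rfl]
    rw [Finset.sum_congr rfl fun ν _ => sgn_mul_self (ν i)]
    simp [Finset.card_univ]
  · rw [if_neg h]
    exact sum_sgn_mul_indep i (fun ν => sgn (ν k)) (fun ν b => by
      show sgn (Function.update ν i b k) = sgn (ν k)
      rw [Function.update_of_ne (Ne.symm h)])

lemma uoro_inner_sum {n p : ℕ} (i : Fin n) (j : Fin p) (H : Matrix (Fin n) (Fin p) ℝ)
    (a b ρ₁ : ℝ) (hρ₁ : ρ₁ ≠ 0) :
    ∑ ν : Fin n → Bool, ((2 : ℝ) ^ n)⁻¹ *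
      ((a + ρ₁ * sgn (ν i)) * (b + ρ₁⁻¹ * ∑ k, sgn (ν k) * H k j)) = a * b + H i j := by
  classical
  have hcard : (Finset.univ : Finset (Fin n → Bool)).card = 2 ^ n := by
    simp [Finset.card_univ]
  have h2 : ((2 : ℝ) ^ n) ≠ 0 := by positivity
  have expand : ∀ ν : Fin n → Bool,
      (a + ρ₁ * sgn (ν i)) * (b + ρ₁⁻¹ * ∑ k, sgn (ν k) * H k j)
      = a * b + (a * ρ₁⁻¹) * ∑ k, sgn (ν k) * H k j
        + (ρ₁ * b) * sgn (ν i)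
        + sgn (ν i) * ∑ k, sgn (ν k) * H k j := by
    intro ν
    field_simp
    ring
  rw [← Finset.mul_sum, Finset.sum_congr rfl fun ν _ => expand ν]
  have s1 : ∑ ν : Fin n → Bool, (a * b) = (2:ℝ)^n * (a*b) := by
    simp [hcard]
  have s2 : ∑ ν : Fin n → Bool, (a * ρ₁⁻¹) * ∑ k, sgn (ν k) * H k j = 0 := by
    rw [← Finset.mul_sum, Finset.sum_comm]
    have : ∀ k : Fin n, ∑ ν : Fin n → Bool, sgn (ν k) * H k j = 0 := by
      intro k
      rw [← Finset.sum_mul, sum_sgn, zero_mul]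
    rw [Finset.sum_congr rfl fun k _ => this k]
    simp
  have s3 : ∑ ν : Fin n → Bool, (ρ₁ * b) * sgn (ν i) = 0 := by
    rw [← Finset.mul_sum, sum_sgn, mul_zero]
  have s4 : ∑ ν : Fin n → Bool, sgn (ν i) * ∑ k, sgn (ν k) * H k j
      = (2:ℝ)^n * H i j := by
    have : ∀ ν : Fin n → Bool, sgn (ν i) * ∑ k, sgn (ν k) * H k j
        = ∑ k, (sgn (ν i) * sgn (ν k)) * H k j := by
      intro ν; rw [Finset.mul_sum]; congr 1; funext k; ring
    rw [Finset.sum_congr rfl fun ν _ => this ν, Finset.sum_comm]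
    have : ∀ k : Fin n, ∑ ν : Fin n → Bool, (sgn (ν i) * sgn (ν k)) * H k j
        = (if i = k then (2:ℝ)^n else 0) * H k j := by
      intro k; rw [← Finset.sum_mul, sum_sgn_mul_sgn]
    rw [Finset.sum_congr rfl fun k _ => this k]
    simp
  rw [Finset.sum_add_distrib, Finset.sum_add_distrib, Finset.sum_add_distrib,
    s1, s2, s3, s4]
  field_simp
  ring

/-- One step of the UORO update preserves unbiasedness: if
`E[s̄t ⊗ θ̄t] = Gt`, then with `s̄_{t+1} = ρ₀ D s̄t + ρ₁ ν` and
`θ̄_{t+1} = θ̄t/ρ₀ + (νᵀ H)/ρ₁`, where `ν` is a vector of independent uniform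
`±1` signs independent of `(s̄t, θ̄t)` and `ρ₀, ρ₁ > 0` are deterministic,
`E[s̄_{t+1} ⊗ θ̄_{t+1}] = D * Gt + H = G_{t+1}`. -/
theorem uoro_step_unbiased (n p : ℕ)
    (Ω : Type) [Fintype Ω] (P : Ω → ℝ)
    (hP : ∀ ω, 0 ≤ P ω) (hPsum : ∑ ω, P ω = 1)
    (sbar : Ω → Fin n → ℝ) (θbar : Ω → Fin p → ℝ)
    (D : Matrix (Fin n) (Fin n) ℝ) (H : Matrix (Fin n) (Fin p) ℝ)
    (Gt : Matrix (Fin n) (Fin p) ℝ)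
    (hGt : ∑ ω, P ω • vecMulVec (sbar ω) (θbar ω) = Gt)
    (ρ₀ ρ₁ : ℝ) (hρ₀ : 0 < ρ₀) (hρ₁ : 0 < ρ₁)
    (Gnext : Matrix (Fin n) (Fin p) ℝ) (hGnext : Gnext = D * Gt + H) :
    ∑ q : Ω × (Fin n → Bool),
        (P q.1 * ((2 : ℝ) ^ n)⁻¹) •
          vecMulVec (ρ₀ • D.mulVec (sbar q.1) + ρ₁ • fun i => sgn (q.2 i))
            (ρ₀⁻¹ • θbar q.1 + ρ₁⁻¹ • ((fun i => sgn (q.2 i)) ᵥ* H)) = Gnext := by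
  classical
  subst hGnext
  ext i j
  rw [Matrix.sum_apply]
  have entry : ∀ q : Ω × (Fin n → Bool),
      ((P q.1 * ((2 : ℝ) ^ n)⁻¹) •
        vecMulVec (ρ₀ • D.mulVec (sbar q.1) + ρ₁ • fun i => sgn (q.2 i))
          (ρ₀⁻¹ • θbar q.1 + ρ₁⁻¹ • ((fun i => sgn (q.2 i)) ᵥ* H))) i j
      = P q.1 * ((2:ℝ)^n)⁻¹ * ((ρ₀ * D.mulVec (sbar q.1) i + ρ₁ * sgn (q.2 i))
        * (ρ₀⁻¹ * θbar q.1 j + ρ₁⁻¹ * ∑ k, sgn (q.2 k) * H k j)) := by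
    intro q
    simp only [Matrix.smul_apply, vecMulVec_apply, Pi.add_apply, Pi.smul_apply,
      smul_eq_mul, Matrix.vecMul, dotProduct]
  rw [Finset.sum_congr rfl fun q _ => entry q]
  rw [Fintype.sum_prod_type]
  have hinner : ∀ ω : Ω,
      ∑ ν : Fin n → Bool, P ω * ((2:ℝ)^n)⁻¹ *
        ((ρ₀ * D.mulVec (sbar ω) i + ρ₁ * sgn (ν i))
          * (ρ₀⁻¹ * θbar ω j + ρ₁⁻¹ * ∑ k, sgn (ν k) * H k j))
      = P ω * ((D.mulVec (sbar ω) i) * θbar ω j + H i j) := by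
    intro ω
    have := uoro_inner_sum i j H (ρ₀ * D.mulVec (sbar ω) i) (ρ₀⁻¹ * θbar ω j) ρ₁ hρ₁.ne'
    calc ∑ ν : Fin n → Bool, P ω * ((2:ℝ)^n)⁻¹ *
          ((ρ₀ * D.mulVec (sbar ω) i + ρ₁ * sgn (ν i))
            * (ρ₀⁻¹ * θbar ω j + ρ₁⁻¹ * ∑ k, sgn (ν k) * H k j))
        = P ω * ∑ ν : Fin n → Bool, ((2:ℝ)^n)⁻¹ *
          ((ρ₀ * D.mulVec (sbar ω) i + ρ₁ * sgn (ν i))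
            * (ρ₀⁻¹ * θbar ω j + ρ₁⁻¹ * ∑ k, sgn (ν k) * H k j)) := by
          rw [Finset.mul_sum]; congr 1; funext ν; ring
      _ = P ω * ((ρ₀ * D.mulVec (sbar ω) i) * (ρ₀⁻¹ * θbar ω j) + H i j) := by rw [this]
      _ = P ω * ((D.mulVec (sbar ω) i) * θbar ω j + H i j) := by
          congr 1
          field_simp
  rw [Finset.sum_congr rfl fun ω _ => hinner ω]
  have hDG : (D * Gt) i j = ∑ ω, P ω * ((D.mulVec (sbar ω) i) * θbar ω j) := by
    rw [← hGt]
    simp only [Matrix.mul_apply, Matrix.sum_apply, Matrix.smul_apply, vecMulVec_apply,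
      smul_eq_mul, Matrix.mulVec, dotProduct]
    simp only [Finset.mul_sum]
    rw [Finset.sum_comm]
    refine Finset.sum_congr rfl fun ω _ => ?_
    conv_rhs => rw [Finset.sum_mul, Finset.mul_sum]
    exact Finset.sum_congr rfl fun k _ => by ring
  simp only [mul_add]
  rw [Finset.sum_add_distrib, ← Finset.sum_mul, hPsum, one_mul, Matrix.add_apply, hDG]
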